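/- Let ABC be a triangle and let X be a point lying inside or on the boundary of triangle ABC. Then for every point Y in the plane, a·AX·AY + b·BX·BY + c·CX·CY ≥ a·b·c, and the minimum value a·b·c of the left-hand side over Y is attained exactly at the isogonal conjugate of X (characterized as the point Y for which the three numbers (x-a)(y-a)/((b-a)(c-a)) etc. are nonnegative reals). -/

import Mathlib

/-!
With `z_a = (x - a)(y - a) / ((b - a)(c - a))` and its cyclic analogues, `z_a + z_b + z_c = 1`
identically, while `BC · AX · AY = |z_a| · BC · CA · AB`. So the left-hand side is
`(|z_a| + |z_b| + |z_c|) · BC · CA · AB`, and `|z_a| + |z_b| + |z_c| ≥ Re (z_a + z_b + z_c) = 1`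
with equality exactly when `|z_v| = Re z_v`, i.e. `z_v ≥ 0`, for each vertex `v`.
-/

open scoped ComplexOrder

namespace Complex

lemma nonneg_iff_exists_ofReal {z : ℂ} : 0 ≤ z ↔ ∃ r : ℝ, 0 ≤ r ∧ z = r :=
  ⟨fun h ↦ ⟨z.re, (nonneg_iff.1 h).1, eq_re_of_ofReal_le (zero_le_real.2 le_rfl |>.trans h)⟩,
    fun ⟨_, hr, hz⟩ ↦ hz ▸ zero_le_real.2 hr⟩

lemma re_sum_le_sum_norm {ι : Type*} (s : Finset ι) (z : ι → ℂ) :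
    (∑ i ∈ s, z i).re ≤ ∑ i ∈ s, ‖z i‖ := by
  rw [re_sum]
  exact Finset.sum_le_sum fun i _ ↦ re_le_norm (z i)

lemma sum_norm_eq_re_sum_iff {ι : Type*} (s : Finset ι) (z : ι → ℂ) :
    ∑ i ∈ s, ‖z i‖ = (∑ i ∈ s, z i).re ↔ ∀ i ∈ s, 0 ≤ z i := by
  rw [re_sum, eq_comm, Finset.sum_eq_sum_iff_of_le fun i _ ↦ re_le_norm (z i)]
  simp only [re_eq_norm]

end Complex

/-- The left-hand side is the second divided difference of the monic quadratic
`t ↦ (t - x)(t - y)` at the nodes `a, b, c`, i.e. its leading coefficient. -/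
lemma divided_difference_sum_eq_one {K : Type*} [Field K] {a b c : K}
    (hab : a ≠ b) (hac : a ≠ c) (hbc : b ≠ c) (x y : K) :
    (x - a) * (y - a) / ((b - a) * (c - a)) + (x - b) * (y - b) / ((a - b) * (c - b)) +
      (x - c) * (y - c) / ((a - c) * (b - c)) = 1 := by
  have := sub_ne_zero.2 hab
  have := sub_ne_zero.2 hac
  have := sub_ne_zero.2 hbc
  have := sub_ne_zero.2 hab.symm
  have := sub_ne_zero.2 hac.symm
  have := sub_ne_zero.2 hbc.symm
  field_simp
  ring

lemma Complex.dist_mul_dist_mul_dist_eq {a b c : ℂ} (hab : a ≠ b) (hac : a ≠ c) (x y : ℂ) :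
    dist b c * dist a x * dist a y =
      ‖(x - a) * (y - a) / ((b - a) * (c - a))‖ * (dist a b * dist b c * dist c a) := by
  have hb : dist a b ≠ 0 := dist_ne_zero.2 hab
  have hc : dist c a ≠ 0 := dist_ne_zero.2 hac.symm
  simp only [norm_div, norm_mul, ← dist_eq, dist_comm x, dist_comm y, dist_comm b a]
  field_simp

theorem stmt_16_general (a b c x : ℂ) (hab : a ≠ b) (hac : a ≠ c) (hbc : b ≠ c)
 :
    (∀ y : ℂ, dist b c * dist a x * dist a y + dist c a * dist b x * dist b y +
        dist a b * dist c x * dist c y ≥ dist b c * dist c a * dist a b) ∧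
    (∀ y : ℂ, (dist b c * dist a x * dist a y + dist c a * dist b x * dist b y +
        dist a b * dist c x * dist c y = dist b c * dist c a * dist a b) ↔
      ((∃ r : ℝ, 0 ≤ r ∧ (x - a) * (y - a) / ((b - a) * (c - a)) = (r : ℂ)) ∧
       (∃ r : ℝ, 0 ≤ r ∧ (x - b) * (y - b) / ((a - b) * (c - b)) = (r : ℂ)) ∧
       (∃ r : ℝ, 0 ≤ r ∧ (x - c) * (y - c) / ((a - c) * (b - c)) = (r : ℂ)))) := by
  let z (y : ℂ) : Fin 3 → ℂ := ![(x - a) * (y - a) / ((b - a) * (c - a)),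
    (x - b) * (y - b) / ((a - b) * (c - b)), (x - c) * (y - c) / ((a - c) * (b - c))]
  have hz (y : ℂ) : ∑ i, z y i = 1 := by
    simpa [Fin.sum_univ_three, z] using divided_difference_sum_eq_one hab hac hbc x y
  have hlhs (y : ℂ) : dist b c * dist a x * dist a y + dist c a * dist b x * dist b y +
      dist a b * dist c x * dist c y = (∑ i, ‖z y i‖) * (dist b c * dist c a * dist a b) := by
    have h₁ := Complex.dist_mul_dist_mul_dist_eq hab hac x y
    have h₂ := Complex.dist_mul_dist_mul_dist_eq hab.symm hbc x y
    have h₃ := Complex.dist_mul_dist_mul_dist_eq hac.symm hbc.symm x y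
    simp only [Fin.sum_univ_three, z, Matrix.cons_val, dist_comm] at h₁ h₂ h₃ ⊢
    linear_combination h₁ + h₂ + h₃
  have hD : 0 < dist b c * dist c a * dist a b := by
    have := dist_pos.2 hab; have := dist_pos.2 hbc; have := dist_pos.2 hac.symm
    positivity
  refine ⟨fun y ↦ ?_, fun y ↦ ?_⟩
  · rw [hlhs, ge_iff_le]
    refine le_mul_of_one_le_left hD.le ?_
    simpa [hz y] using Complex.re_sum_le_sum_norm Finset.univ (z y)
  · rw [hlhs, mul_eq_right₀ hD.ne', ← Complex.one_re, ← hz y,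
      Complex.sum_norm_eq_re_sum_iff]
    simp [Fin.forall_fin_succ, z, Complex.nonneg_iff_exists_ofReal]

theorem stmt_16 (a b c x : ℂ) (hab : a ≠ b) (hac : a ≠ c) (hbc : b ≠ c)
    (hnc : ¬ Collinear ℝ ({a, b, c} : Set ℂ))
    (hx : ∃ u v w : ℝ, 0 ≤ u ∧ 0 ≤ v ∧ 0 ≤ w ∧ u + v + w = 1 ∧
      x = (u : ℂ) * a + (v : ℂ) * b + (w : ℂ) * c) :
    (∀ y : ℂ, dist b c * dist a x * dist a y + dist c a * dist b x * dist b y +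
        dist a b * dist c x * dist c y ≥ dist b c * dist c a * dist a b) ∧
    (∀ y : ℂ, (dist b c * dist a x * dist a y + dist c a * dist b x * dist b y +
        dist a b * dist c x * dist c y = dist b c * dist c a * dist a b) ↔
      ((∃ r : ℝ, 0 ≤ r ∧ (x - a) * (y - a) / ((b - a) * (c - a)) = (r : ℂ)) ∧
       (∃ r : ℝ, 0 ≤ r ∧ (x - b) * (y - b) / ((a - b) * (c - b)) = (r : ℂ)) ∧
       (∃ r : ℝ, 0 ≤ r ∧ (x - c) * (y - c) / ((a - c) * (b - c)) = (r : ℂ)))) :=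
  stmt_16_general a b c x hab hac hbc
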